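/- On an almost Kähler manifold (M,g,J,κ), the curvature R̃ of the Hermitian connection ∇̃ = ∇ − (1/2) J∇J satisfies, for all vector fields X, Y, Z, W: R̃(X,Y,Z,W) = (1/2) R(X,Y,Z,W) + (1/2) R(X,Y,JZ,JW) − (1/4) g((∇_X J)(∇_Y J)Z − (∇_Y J)(∇_X J)Z, W), where R is the Riemann curvature of g. -/
import Mathlib


noncomputable section

/-- An algebraic (Koszul-style) model of a `2n`-dimensional almost Kähler manifold
`(M, g, J, κ)`.  `Point` is the set of points of `M`, `F` plays the role of the
ring of complex-valued smooth functions on `M`, and `V` plays the role of the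
module of complexified smooth vector fields on `M`.  The metric `g`, the almost
complex structure `J` and the Levi-Civita connection `nabla` are extended
complex-linearly.  `κ(X,Y) = g(JX,Y)` is required to be closed (so that `κ` is a
symplectic form calibrating `J`), i.e. `(M,g,J,κ)` is an almost Kähler manifold. -/
structure AlmostKahler where
  /-- the points of the manifold `M` -/
  Point : Type
  /-- half the real dimension of `M` -/
  n : ℕ
  /-- the ring of complex-valued smooth functions on `M` -/
  F : Type
  [ringF : CommRing F]
  [algF : Algebra ℂ F]
  /-- the module of complexified smooth vector fields on `M` -/
  V : Type
  [grpV : AddCommGroup V]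
  [modV : Module F V]
  /-- evaluation of a function at a point -/
  eval : Point → F → ℂ
  eval_add : ∀ p f h, eval p (f + h) = eval p f + eval p h
  eval_mul : ∀ p f h, eval p (f * h) = eval p f * eval p h
  eval_algebraMap : ∀ p (c : ℂ), eval p (algebraMap ℂ F c) = c
  /-- complex conjugation of functions -/
  conjF : F → F
  conjF_add : ∀ f h, conjF (f + h) = conjF f + conjF h
  conjF_mul : ∀ f h, conjF (f * h) = conjF f * conjF h
  conjF_conjF : ∀ f, conjF (conjF f) = f
  conjF_algebraMap : ∀ c : ℂ, conjF (algebraMap ℂ F c) = algebraMap ℂ F (starRingEnd ℂ c)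
  eval_conjF : ∀ p f, eval p (conjF f) = starRingEnd ℂ (eval p f)
  /-- complex conjugation of vector fields -/
  conjV : V → V
  conjV_add : ∀ X Y, conjV (X + Y) = conjV X + conjV Y
  conjV_smul : ∀ (f : F) (X : V), conjV (f • X) = conjF f • conjV X
  conjV_conjV : ∀ X, conjV (conjV X) = X
  /-- the action of a vector field on a function, as a derivation -/
  deriv : V → F → F
  deriv_add_left : ∀ X Y f, deriv (X + Y) f = deriv X f + deriv Y f
  deriv_smul_left : ∀ (h : F) (X : V) (f : F), deriv (h • X) f = h * deriv X f
  deriv_add : ∀ X f h, deriv X (f + h) = deriv X f + deriv X h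
  deriv_mul : ∀ X f h, deriv X (f * h) = f * deriv X h + h * deriv X f
  deriv_algebraMap : ∀ X (c : ℂ), deriv X (algebraMap ℂ F c) = 0
  deriv_conj : ∀ X f, deriv (conjV X) (conjF f) = conjF (deriv X f)
  /-- vector fields are determined by their action on functions -/
  deriv_ext : ∀ X Y : V, (∀ f, deriv X f = deriv Y f) → X = Y
  /-- the Lie bracket of vector fields -/
  bracket : V → V → V
  bracket_deriv : ∀ X Y f, deriv (bracket X Y) f = deriv X (deriv Y f) - deriv Y (deriv X f)
  /-- the (complex bilinear extension of the) Riemannian metric `g` -/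
  g : V → V → F
  g_add_left : ∀ X Y Z, g (X + Y) Z = g X Z + g Y Z
  g_smul_left : ∀ (f : F) (X Y : V), g (f • X) Y = f * g X Y
  g_symm : ∀ X Y, g X Y = g Y X
  g_conj : ∀ X Y, conjF (g X Y) = g (conjV X) (conjV Y)
  /-- positivity of the underlying Riemannian metric -/
  g_pos : ∀ p X, 0 ≤ (eval p (g X (conjV X))).re
  g_nondeg : ∀ X : V, (∀ Y, g X Y = 0) → X = 0
  /-- the almost complex structure `J` (complex linearly extended) -/
  J : V → V
  J_add : ∀ X Y, J (X + Y) = J X + J Y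
  J_smul : ∀ (f : F) (X : V), J (f • X) = f • J X
  J_J : ∀ X, J (J X) = -X
  J_conj : ∀ X, conjV (J X) = J (conjV X)
  /-- `g` is Hermitian with respect to `J`; equivalently `J` is calibrated by the
  fundamental `2`-form `κ(X,Y) = g(JX,Y)`, i.e. `g(·,·) = κ(·,J·)` -/
  g_J : ∀ X Y, g (J X) (J Y) = g X Y
  /-- the Levi-Civita connection of `g` (complex linearly extended) -/
  nabla : V → V → V
  nabla_add_left : ∀ X Y Z, nabla (X + Y) Z = nabla X Z + nabla Y Z
  nabla_smul_left : ∀ (f : F) (X Y : V), nabla (f • X) Y = f • nabla X Y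
  nabla_add_right : ∀ X Y Z, nabla X (Y + Z) = nabla X Y + nabla X Z
  nabla_leibniz : ∀ (X : V) (f : F) (Y : V), nabla X (f • Y) = deriv X f • Y + f • nabla X Y
  nabla_torsion_free : ∀ X Y, nabla X Y - nabla Y X = bracket X Y
  nabla_metric : ∀ X Y Z, deriv X (g Y Z) = g (nabla X Y) Z + g Y (nabla X Z)
  nabla_conj : ∀ X Y, conjV (nabla X Y) = nabla (conjV X) (conjV Y)
  /-- the fundamental `2`-form `κ(X,Y) = g(JX,Y)` is closed: `dκ = 0`,
  so `κ` is a symplectic form on `M` -/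
  kappa_closed : ∀ X Y Z,
    deriv X (g (J Y) Z) - deriv Y (g (J X) Z) + deriv Z (g (J X) Y)
      - g (J (bracket X Y)) Z + g (J (bracket X Z)) Y - g (J (bracket Y Z)) X = 0

namespace AlmostKahler

instance (M : AlmostKahler) : CommRing M.F := M.ringF
instance (M : AlmostKahler) : Algebra ℂ M.F := M.algF
instance (M : AlmostKahler) : AddCommGroup M.V := M.grpV
instance (M : AlmostKahler) : Module M.F M.V := M.modV

variable (M : AlmostKahler)

/-- a constant function on `M` -/
def cF (c : ℂ) : M.F := algebraMap ℂ M.F c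

/-- scalar multiplication of a vector field by a complex constant -/
def csmul (c : ℂ) (X : M.V) : M.V := algebraMap ℂ M.F c • X

/-- a real vector field: one fixed by conjugation -/
def IsReal (X : M.V) : Prop := M.conjV X = X

/-- a vector field of type `(1,0)`: a section of the `i`-eigenbundle of `J` -/
def IsHolo (Z : M.V) : Prop := M.J Z = M.csmul Complex.I Z

/-- a vector field of type `(0,1)`: a section of the `(−i)`-eigenbundle of `J` -/
def IsAntiHolo (W : M.V) : Prop := M.J W = M.csmul (-Complex.I) W

/-- the vector field `X` vanishes at the point `p` -/
def VanishesAt (p : M.Point) (X : M.V) : Prop := ∀ f, M.eval p (M.deriv X f) = 0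

/-- the value of the vector field `X` at the point `p` is of type `(0,1)` -/
def AntiHoloAt (p : M.Point) (X : M.V) : Prop :=
  M.VanishesAt p (M.J X + M.csmul Complex.I X)

/-- the projection of a vector field onto its `(0,1)`-part `W^{0,1}` -/
def proj01 (W : M.V) : M.V := M.csmul (1/2) (W + M.csmul Complex.I (M.J W))

/-- the Nijenhuis tensor `N_J(X,Y) = [JX,JY] − J[JX,Y] − J[X,JY] − [X,Y]` -/
def N (X Y : M.V) : M.V :=
  M.bracket (M.J X) (M.J Y) - M.J (M.bracket (M.J X) Y) - M.J (M.bracket X (M.J Y))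
    - M.bracket X Y

/-- `J` is integrable: the Nijenhuis tensor vanishes -/
def Integrable : Prop := ∀ X Y, M.N X Y = 0

/-- `(M,g,J,κ)` is a Kähler manifold: the (`κ`-calibrated) almost complex structure
`J` is integrable, i.e. the Nijenhuis tensor vanishes -/
def IsKahler : Prop := ∀ X Y, M.N X Y = 0

/-- the covariant derivative `(∇_X J)(Y) = ∇_X (JY) − J ∇_X Y` -/
def nablaJ (X Y : M.V) : M.V := M.nabla X (M.J Y) - M.J (M.nabla X Y)

/-- the covariant derivative of the Nijenhuis tensor, `(∇_X N_J)(Y,Z)` -/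
def nablaN (X Y Z : M.V) : M.V :=
  M.nabla X (M.N Y Z) - M.N (M.nabla X Y) Z - M.N Y (M.nabla X Z)

/-- the `(2,1)`-tensor `B(X,Y) = J(∇_X J)Y − (∇_{JX} J)Y` -/
def B (X Y : M.V) : M.V := M.J (M.nablaJ X Y) - M.nablaJ (M.J X) Y

/-- the covariant derivative `(∇_X B)(Y,Z)` -/
def nablaB (X Y Z : M.V) : M.V :=
  M.nabla X (M.B Y Z) - M.B (M.nabla X Y) Z - M.B Y (M.nabla X Z)

/-- the tensor `L(X,Y,Z,W) = g((∇_X B)(Y,Z), W)` -/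
def L (X Y Z W : M.V) : M.F := M.g (M.nablaB X Y Z) W

/-- the Riemann curvature tensor of `g`:
`R(X,Y,Z,W) = g(∇_X ∇_Y Z − ∇_Y ∇_X Z − ∇_{[X,Y]} Z, W)` -/
def R (X Y Z W : M.V) : M.F :=
  M.g (M.nabla X (M.nabla Y Z) - M.nabla Y (M.nabla X Z) - M.nabla (M.bracket X Y) Z) W

/-- the tensor `R^J(X,Y,Z,W) = g(∇_X J∇_Y Z − ∇_Y J∇_X Z − ∇_{[X,Y]} JZ, JW)` -/
def RJ (X Y Z W : M.V) : M.F :=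
  M.g (M.nabla X (M.J (M.nabla Y Z)) - M.nabla Y (M.J (M.nabla X Z))
    - M.nabla (M.bracket X Y) (M.J Z)) (M.J W)

/-- the Hermitian connection `∇̃ = ∇ − (1/2) J ∇J`,
i.e. `∇̃_X Y = ∇_X Y − (1/2) J((∇_X J)Y)` -/
def hnabla (X Y : M.V) : M.V := M.nabla X Y - M.csmul (1/2) (M.J (M.nablaJ X Y))

/-- the torsion of the Hermitian connection -/
def hT (X Y : M.V) : M.V := M.hnabla X Y - M.hnabla Y X - M.bracket X Y

/-- the curvature tensor `R̃` of the Hermitian connection `∇̃` -/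
def hR (X Y Z W : M.V) : M.F :=
  M.g (M.hnabla X (M.hnabla Y Z) - M.hnabla Y (M.hnabla X Z)
    - M.hnabla (M.bracket X Y) Z) W

/-- `Z : Fin M.n → M.V` is a generalized normal holomorphic frame around the
point `o`: a local `(1,0)`-frame around `o` such that
(1) `∇_{Z_k} Z̄_i (o) = 0`;
(2) `∇_{Z_k} Z_i (o)` is of type `(0,1)`;
(3) `G_{r s̄} = g(Z_r, Z̄_s)` satisfies `G_{r s̄}(o) = δ_{rs}` and `dG_{r s̄}[o] = 0`;
(4) `∇_{Z_r} ∇_{Z̄_k} Z_i (o) = 0`. -/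
structure IsGNHF (o : M.Point) (Z : Fin M.n → M.V) : Prop where
  holo : ∀ i, M.IsHolo (Z i)
  frameAt : ∀ W : M.V, M.IsHolo W →
    ∃ c : Fin M.n → ℂ, M.VanishesAt o (W - ∑ i, M.csmul (c i) (Z i))
  cond1 : ∀ k i, M.VanishesAt o (M.nabla (Z k) (M.conjV (Z i)))
  cond2 : ∀ k i, M.AntiHoloAt o (M.nabla (Z k) (Z i))
  cond3a : ∀ r s, M.eval o (M.g (Z r) (M.conjV (Z s))) = if r = s then 1 else 0
  cond3b : ∀ r s X, M.eval o (M.deriv X (M.g (Z r) (M.conjV (Z s)))) = 0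
  cond4 : ∀ r k i, M.VanishesAt o (M.nabla (Z r) (M.nabla (M.conjV (Z k)) (Z i)))

end AlmostKahler

namespace AlmostKahler

variable (M : AlmostKahler)

lemma g_csmul_left' (c : ℂ) (X Y : M.V) : M.g (M.csmul c X) Y = M.cF c * M.g X Y :=
  M.g_smul_left _ X Y

lemma csmul_neg_one' (X : M.V) : M.csmul (-1) X = -X := by
  unfold AlmostKahler.csmul
  rw [map_neg, map_one, neg_smul, one_smul]

lemma g_neg_left' (X Y : M.V) : M.g (-X) Y = - M.g X Y := by
  rw [← M.csmul_neg_one', M.g_csmul_left']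
  unfold AlmostKahler.cF
  rw [map_neg, map_one, neg_mul, one_mul]

lemma g_sub_left' (X Y Z : M.V) : M.g (X - Y) Z = M.g X Z - M.g Y Z := by
  rw [sub_eq_add_neg, M.g_add_left, M.g_neg_left', ← sub_eq_add_neg]

lemma g_neg_right' (X Y : M.V) : M.g X (-Y) = - M.g X Y := by
  rw [M.g_symm, M.g_neg_left', M.g_symm]

lemma J_csmul' (c : ℂ) (X : M.V) : M.J (M.csmul c X) = M.csmul c (M.J X) :=
  M.J_smul _ _

lemma J_neg' (X : M.V) : M.J (-X) = - M.J X := by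
  rw [← M.csmul_neg_one', M.J_csmul', M.csmul_neg_one']

lemma J_sub' (X Y : M.V) : M.J (X - Y) = M.J X - M.J Y := by
  rw [sub_eq_add_neg, M.J_add, M.J_neg', ← sub_eq_add_neg]

lemma g_J_right' (U W : M.V) : M.g (M.J U) W = - M.g U (M.J W) := by
  conv_lhs => rw [show W = -(M.J (M.J W)) by rw [M.J_J, neg_neg]]
  rw [M.g_neg_right', M.g_J]

lemma nabla_csmul_right' (X : M.V) (c : ℂ) (Y : M.V) :
    M.nabla X (M.csmul c Y) = M.csmul c (M.nabla X Y) := by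
  unfold AlmostKahler.csmul
  rw [M.nabla_leibniz, M.deriv_algebraMap, zero_smul, zero_add]

lemma nabla_neg_right' (X Y : M.V) : M.nabla X (-Y) = - M.nabla X Y := by
  rw [← M.csmul_neg_one', M.nabla_csmul_right', M.csmul_neg_one']

lemma nabla_sub_right' (X Y Z : M.V) : M.nabla X (Y - Z) = M.nabla X Y - M.nabla X Z := by
  rw [sub_eq_add_neg, M.nabla_add_right, M.nabla_neg_right', ← sub_eq_add_neg]

end AlmostKahler

/-- On an almost Kähler manifold `(M,g,J,κ)`, the curvature `R̃` of the Hermitian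
connection `∇̃ = ∇ − (1/2) J∇J` satisfies, for all vector fields `X, Y, Z, W`:
`R̃(X,Y,Z,W) = (1/2) R(X,Y,Z,W) + (1/2) R(X,Y,JZ,JW)
  − (1/4) g((∇_X J)(∇_Y J)Z − (∇_Y J)(∇_X J)Z, W)`,
where `R` is the Riemann curvature of `g`. -/
theorem hR_formula (M : AlmostKahler) (X Y Z W : M.V) :
    M.hR X Y Z W =
      M.cF (1/2) * M.R X Y Z W + M.cF (1/2) * M.R X Y (M.J Z) (M.J W)
      - M.cF (1/4) * M.g (M.nablaJ X (M.nablaJ Y Z) - M.nablaJ Y (M.nablaJ X Z)) W := by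
  set A1 : M.V := M.nabla X (M.nabla Y Z) - M.nabla Y (M.nabla X Z)
    - M.nabla (M.bracket X Y) Z with hA1
  set A2 : M.V := M.nabla X (M.nabla Y (M.J Z)) - M.nabla Y (M.nabla X (M.J Z))
    - M.nabla (M.bracket X Y) (M.J Z) with hA2
  set A3 : M.V := M.nablaJ X (M.nablaJ Y Z) - M.nablaJ Y (M.nablaJ X Z) with hA3
  set T : M.V := M.hnabla X (M.hnabla Y Z) - M.hnabla Y (M.hnabla X Z)
    - M.hnabla (M.bracket X Y) Z with hT
  have hvec : T = M.csmul (1/2) A1 - M.csmul (1/2) (M.J A2) - M.csmul (1/4) A3 := by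
    simp only [hT, hA1, hA2, hA3, AlmostKahler.hnabla, AlmostKahler.nablaJ,
      M.nabla_sub_right', M.nabla_add_right, M.nabla_csmul_right', M.nabla_neg_right',
      M.J_sub', M.J_add, M.J_csmul', M.J_neg', M.J_J]
    letI : Module ℂ M.V := Module.compHom M.V (algebraMap ℂ M.F)
    have hc : ∀ (c : ℂ) (v : M.V), M.csmul c v = c • v := fun _ _ => rfl
    simp only [hc]
    module
  have hJ2 : M.g (M.J A2) W = - M.g A2 (M.J W) := M.g_J_right' A2 W
  calc M.hR X Y Z W = M.g T W := rfl
    _ = M.g (M.csmul (1/2) A1 - M.csmul (1/2) (M.J A2) - M.csmul (1/4) A3) W := by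
        rw [hvec]
    _ = _ := by
        rw [M.g_sub_left', M.g_sub_left', M.g_csmul_left', M.g_csmul_left',
          M.g_csmul_left', hJ2]
        simp only [AlmostKahler.R, ← hA1, ← hA2, ← hA3]
        ring
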